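/- For all x, y, d in G, (x · y) ◁ d = (x ◁ d) · (y ◁ d); that is, the right action map R_d(b) := b ◁ d is a group endomorphism of (G, ·). -/
import Mathlib


/-- Words over the alphabet X = {x₀, x₁}, encoded as lists of booleans
(`false` ↔ x₀, `true` ↔ x₁). -/
abbrev Word : Type := List Bool

/-- Noncommutative formal power series over X with real coefficients. -/
abbrev Series : Type := Word → ℝ

/-- Auxiliary recursion computing the coefficient of the shuffle product. -/
def sh : Word → Series → Series → ℝ
  | [], c, d => c [] * d []
  | a :: w, c, d => sh w (fun u => c (a :: u)) d + sh w c (fun u => d (a :: u))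

/-- The shuffle product of two series. -/
def shuffle (c d : Series) : Series := fun w => sh w c d

/-- Left concatenation by the letter x₀. -/
def X0f (c : Series) : Series := fun w =>
  match w with
  | false :: w' => c w'
  | _ => 0

/-- Left concatenation by the letter x₁. -/
def X1f (c : Series) : Series := fun w =>
  match w with
  | true :: w' => c w'
  | _ => 0

/-- The indicator series of a word. -/
def deltaW (η : Word) : Series := fun w => if w = η then 1 else 0

/-- The shuffle unit 1∅. -/
def oneS : Series := deltaW []

/-- Mixed composition product of a word with a pair of series:
∅ ∘̃ z = ∅, (x₀η) ∘̃ z = x₀(η ∘̃ z),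
(x₁η) ∘̃ z = x₁(z₁ ⧢ (η ∘̃ z)) + x₀(z₂ ⧢ (η ∘̃ z)). -/
def wmix : Word → Series × Series → Series
  | [], _ => oneS
  | false :: η, z => X0f (wmix η z)
  | true :: η, z => X1f (shuffle z.1 (wmix η z)) + X0f (shuffle z.2 (wmix η z))

/-- Mixed composition product `c ∘̃ z`, extended linearly in the left argument.
(Since `wmix η z` vanishes on words shorter than `η`, the sum may be truncated.) -/
def mixcomp (c : Series) (z : Series × Series) : Series := fun w =>
  ∑ n ∈ Finset.range (w.length + 1), ∑ f : Fin n → Bool,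
    c (List.ofFn f) * wmix (List.ofFn f) z w

/-- Composition product of a word with a series:
∅ ∘ d = ∅, (x₀η) ∘ d = x₀(η ∘ d), (x₁η) ∘ d = x₀(d ⧢ (η ∘ d)). -/
def wcomp : Word → Series → Series
  | [], _ => oneS
  | false :: η, d => X0f (wcomp η d)
  | true :: η, d => X0f (shuffle d (wcomp η d))

/-- Composition product `c ∘ d`, extended linearly in the left argument. -/
def compP (c d : Series) : Series := fun w =>
  ∑ n ∈ Finset.range (w.length + 1), ∑ f : Fin n → Bool,
    c (List.ofFn f) * wcomp (List.ofFn f) d w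

/-- The group product on G: (c₁,c₂)·(d₁,d₂) = (c₁ ⧢ d₁, c₂ + c₁ ⧢ d₂). -/
def gmul (c d : Series × Series) : Series × Series :=
  (shuffle c.1 d.1, c.2 + shuffle c.1 d.2)

/-- The identity element e = (1∅, 0) of G. -/
def geId : Series × Series := (oneS, 0)

/-- Shuffle powers. -/
def shPow (c : Series) : ℕ → Series
  | 0 => oneS
  | n + 1 => shuffle c (shPow c n)

/-- Shuffle inverse of a series with constant coefficient 1, via the
geometric series c^{⧢ -1} = Σ_k (1∅ - c)^{⧢ k} (truncated by word length,
which is exact since 1∅ - c is proper). -/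
def shInv (c : Series) : Series := fun w =>
  ∑ k ∈ Finset.range (w.length + 1), shPow (oneS - c) k w

/-- The group inverse in (G,·). -/
def ginv (c : Series × Series) : Series × Series :=
  (shInv c.1, -(shuffle (shInv c.1) c.2))

/-- The product ◁ on G, componentwise mixed composition. -/
def triOp (c d : Series × Series) : Series × Series :=
  (mixcomp c.1 d, mixcomp c.2 d)

/-- The Grossman–Larson product c ⋆ d = (c ◁ d) · d. -/
def starOp (c d : Series × Series) : Series × Series := gmul (triOp c d) d

-- auxiliary lemmas
lemma sh_congr : ∀ (w : Word) (c c' d d' : Series),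
    (∀ v : Word, v.length ≤ w.length → c v = c' v) →
    (∀ v : Word, v.length ≤ w.length → d v = d' v) → sh w c d = sh w c' d'
  | [], c, c', d, d', hc, hd => by
      simp [sh, hc [] (by simp), hd [] (by simp)]
  | a :: w, c, c', d, d', hc, hd => by
      simp only [sh]
      rw [sh_congr w _ _ _ _ (fun v hv => hc (a :: v) (by simpa using Nat.succ_le_succ hv))
          (fun v hv => hd v (le_trans hv (by simp))),
        sh_congr w c c' _ _ (fun v hv => hc v (le_trans hv (by simp)))
          (fun v hv => hd (a :: v) (by simpa using Nat.succ_le_succ hv))]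

lemma sh_add_right : ∀ (w : Word) (c d d' : Series),
    sh w c (fun v => d v + d' v) = sh w c d + sh w c d'
  | [], c, d, d' => by simp [sh]; ring
  | a :: w, c, d, d' => by
      simp only [sh, sh_add_right w]; ring

lemma sh_add_left : ∀ (w : Word) (c c' d : Series),
    sh w (fun v => c v + c' v) d = sh w c d + sh w c' d
  | [], c, c', d => by simp [sh]; ring
  | a :: w, c, c', d => by
      simp only [sh, sh_add_left w]; ring

lemma sh_smul_right : ∀ (w : Word) (c : Series) (r : ℝ) (d : Series),
    sh w c (fun v => r * d v) = r * sh w c d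
  | [], c, r, d => by simp [sh]; ring
  | a :: w, c, r, d => by
      simp only [sh, sh_smul_right w]; ring

lemma sh_zero_right : ∀ (w : Word) (c : Series), sh w c (fun _ => 0) = 0
  | [], c => by simp [sh]
  | a :: w, c => by simp only [sh, sh_zero_right w]; ring

lemma sh_vanish_right (w : Word) (c d : Series)
    (h : ∀ v : Word, v.length ≤ w.length → d v = 0) : sh w c d = 0 := by
  rw [sh_congr w c c d (fun _ => 0) (fun _ _ => rfl) h, sh_zero_right]

lemma sh_sum_right {ι : Type*} (w : Word) (c : Series) (s : Finset ι) (g : ι → Series) :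
    sh w c (fun v => ∑ i ∈ s, g i v) = ∑ i ∈ s, sh w c (g i) := by
  classical
  induction s using Finset.induction_on with
  | empty => simpa using sh_zero_right w c
  | @insert a s ha ih =>
      rw [Finset.sum_insert ha, ← ih, ← sh_add_right]
      congr 1; funext v; rw [Finset.sum_insert ha]

lemma sh_comm : ∀ (w : Word) (c d : Series), sh w c d = sh w d c
  | [], c, d => by simp [sh]; ring
  | a :: w, c, d => by simp only [sh, sh_comm w]; ring

lemma sh_assoc : ∀ (w : Word) (c d e : Series),
    sh w (shuffle c d) e = sh w c (shuffle d e)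
  | [], c, d, e => by simp [sh, shuffle]; ring
  | a :: w, c, d, e => by
      simp only [sh]
      have h1 : (fun u => shuffle c d (a :: u)) =
          fun u => shuffle (fun v => c (a :: v)) d u + shuffle c (fun v => d (a :: v)) u := by
        funext u; simp [shuffle, sh]
      have h2 : (fun u => shuffle d e (a :: u)) =
          fun u => shuffle (fun v => d (a :: v)) e u + shuffle d (fun v => e (a :: v)) u := by
        funext u; simp [shuffle, sh]
      rw [h1, h2, sh_add_left, sh_add_right,
        sh_assoc w _ d e, sh_assoc w c _ e, sh_assoc w c d _]
      ring

lemma shuffle_comm (c d : Series) : shuffle c d = shuffle d c :=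
  funext fun w => sh_comm w c d

lemma shuffle_assoc (c d e : Series) : shuffle (shuffle c d) e = shuffle c (shuffle d e) :=
  funext fun w => sh_assoc w c d e

lemma wmix_vanish : ∀ (η : Word) (z : Series × Series) (w : Word),
    w.length < η.length → wmix η z w = 0
  | [], _, w, h => by simp at h
  | b :: η, z, [], h => by
      cases b <;> simp [wmix, X0f, X1f]
  | b :: η, z, a :: w, h => by
      have hlt : w.length < η.length := by simpa using Nat.lt_of_succ_lt_succ h
      have hv : ∀ v : Word, v.length ≤ w.length → wmix η z v = 0 :=
        fun v hv => wmix_vanish η z v (lt_of_le_of_lt hv hlt)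
      cases b <;> cases a <;>
        simp [wmix, X0f, X1f, shuffle, wmix_vanish η z w hlt, sh_vanish_right w _ _ hv]

lemma mixcomp_nil (c : Series) (z : Series × Series) : mixcomp c z [] = c [] := by
  simp [mixcomp, wmix, oneS, deltaW]

lemma mixcomp_trunc (c : Series) (z : Series × Series) (w : Word) (N : ℕ)
    (h : w.length ≤ N) :
    mixcomp c z w = ∑ n ∈ Finset.range (N + 1), ∑ f : Fin n → Bool,
      c (List.ofFn f) * wmix (List.ofFn f) z w := by
  unfold mixcomp
  refine Finset.sum_subset (by simp; omega) ?_
  intro n hn hn'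
  simp only [Finset.mem_range] at hn hn'
  refine Finset.sum_eq_zero fun f _ => ?_
  rw [wmix_vanish _ z w (by simp; omega), mul_zero]

lemma sum_fin_succ_bool (n : ℕ) (g : (Fin (n+1) → Bool) → ℝ) :
    ∑ f : Fin (n+1) → Bool, g f = ∑ b : Bool, ∑ f : Fin n → Bool, g (Fin.cons b f) := by
  have h := Fintype.sum_prod_type (fun p : Bool × (Fin n → Bool) => g (Fin.cons p.1 p.2))
  refine Eq.trans ?_ h
  exact (Fintype.sum_equiv (Fin.consEquiv fun _ => Bool)
    (fun p => g (Fin.cons p.1 p.2)) g (fun p => rfl)).symm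

lemma ofFn_cons (n : ℕ) (b : Bool) (f : Fin n → Bool) :
    List.ofFn (Fin.cons b f) = b :: List.ofFn f := by
  rw [List.ofFn_succ]; simp

lemma mixcomp_cons_true (c : Series) (z : Series × Series) (u : Word) :
    mixcomp c z (true :: u) = sh u z.1 (mixcomp (fun v => c (true :: v)) z) := by
  have key : mixcomp c z (true :: u) =
      ∑ m ∈ Finset.range (u.length + 1), ∑ f : Fin m → Bool,
        c (true :: List.ofFn f) * sh u z.1 (wmix (List.ofFn f) z) := by
    show (∑ n ∈ Finset.range (u.length + 1 + 1), ∑ f : Fin n → Bool,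
        c (List.ofFn f) * wmix (List.ofFn f) z (true :: u)) = _
    rw [Finset.sum_range_succ']
    have h0 : (∑ f : Fin 0 → Bool, c (List.ofFn f) * wmix (List.ofFn f) z (true :: u)) = 0 := by
      simp [wmix, oneS, deltaW]
    rw [h0, add_zero]
    refine Finset.sum_congr rfl fun m _ => ?_
    rw [sum_fin_succ_bool m, Fintype.sum_bool]
    have ht : ∀ f : Fin m → Bool,
        c (List.ofFn (Fin.cons true f)) * wmix (List.ofFn (Fin.cons true f)) z (true :: u)
        = c (true :: List.ofFn f) * sh u z.1 (wmix (List.ofFn f) z) := by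
      intro f; rw [ofFn_cons]
      simp [wmix, X0f, X1f, shuffle]
    have hf : ∀ f : Fin m → Bool,
        c (List.ofFn (Fin.cons false f)) * wmix (List.ofFn (Fin.cons false f)) z (true :: u)
        = 0 := by
      intro f; rw [ofFn_cons]
      simp [wmix, X0f]
    simp only [ht, hf, Finset.sum_const_zero, add_zero]
  rw [key]
  rw [sh_congr u z.1 z.1 (mixcomp (fun v => c (true :: v)) z)
    (fun v => ∑ m ∈ Finset.range (u.length + 1), ∑ f : Fin m → Bool,
      c (true :: List.ofFn f) * wmix (List.ofFn f) z v)
    (fun _ _ => rfl)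
    (fun v hv => mixcomp_trunc _ z v u.length hv)]
  rw [sh_sum_right]
  refine (Finset.sum_congr rfl fun m _ => ?_).symm
  rw [sh_sum_right]
  exact Finset.sum_congr rfl fun f _ => sh_smul_right u z.1 _ _

lemma mixcomp_cons_false (c : Series) (z : Series × Series) (u : Word) :
    mixcomp c z (false :: u) = mixcomp (fun v => c (false :: v)) z u
      + sh u z.2 (mixcomp (fun v => c (true :: v)) z) := by
  have key : mixcomp c z (false :: u) =
      (∑ m ∈ Finset.range (u.length + 1), ∑ f : Fin m → Bool,
        c (false :: List.ofFn f) * wmix (List.ofFn f) z u)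
      + ∑ m ∈ Finset.range (u.length + 1), ∑ f : Fin m → Bool,
        c (true :: List.ofFn f) * sh u z.2 (wmix (List.ofFn f) z) := by
    show (∑ n ∈ Finset.range (u.length + 1 + 1), ∑ f : Fin n → Bool,
        c (List.ofFn f) * wmix (List.ofFn f) z (false :: u)) = _
    rw [Finset.sum_range_succ']
    have h0 : (∑ f : Fin 0 → Bool, c (List.ofFn f) * wmix (List.ofFn f) z (false :: u)) = 0 := by
      simp [wmix, oneS, deltaW]
    rw [h0, add_zero, ← Finset.sum_add_distrib]
    refine Finset.sum_congr rfl fun m _ => ?_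
    rw [sum_fin_succ_bool m, Fintype.sum_bool]
    have hT : (∑ f : Fin m → Bool,
        c (List.ofFn (Fin.cons true f)) * wmix (List.ofFn (Fin.cons true f)) z (false :: u))
        = ∑ f : Fin m → Bool, c (true :: List.ofFn f) * sh u z.2 (wmix (List.ofFn f) z) :=
      Finset.sum_congr rfl fun f _ => by rw [ofFn_cons]; simp [wmix, X0f, X1f, shuffle]
    have hF : (∑ f : Fin m → Bool,
        c (List.ofFn (Fin.cons false f)) * wmix (List.ofFn (Fin.cons false f)) z (false :: u))
        = ∑ f : Fin m → Bool, c (false :: List.ofFn f) * wmix (List.ofFn f) z u :=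
      Finset.sum_congr rfl fun f _ => by rw [ofFn_cons]; simp [wmix, X0f]
    rw [hT, hF, add_comm]
  rw [key]
  refine congrArg₂ (· + ·) ?_ ?_
  · rfl
  · rw [sh_congr u z.2 z.2 (mixcomp (fun v => c (true :: v)) z)
      (fun v => ∑ m ∈ Finset.range (u.length + 1), ∑ f : Fin m → Bool,
        c (true :: List.ofFn f) * wmix (List.ofFn f) z v)
      (fun _ _ => rfl)
      (fun v hv => mixcomp_trunc _ z v u.length hv)]
    rw [sh_sum_right]
    refine (Finset.sum_congr rfl fun m _ => ?_).symm
    rw [sh_sum_right]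
    exact Finset.sum_congr rfl fun f _ => sh_smul_right u z.2 _ _

lemma mixcomp_add (c c' : Series) (z : Series × Series) :
    mixcomp (fun w => c w + c' w) z = fun w => mixcomp c z w + mixcomp c' z w := by
  funext w
  simp [mixcomp, add_mul, Finset.sum_add_distrib]

lemma mixcomp_shuffle (z : Series × Series) : ∀ (n : ℕ) (w : Word), w.length ≤ n →
    ∀ c d : Series, mixcomp (shuffle c d) z w = sh w (mixcomp c z) (mixcomp d z)
  | n, [], _, c, d => by
      rw [mixcomp_nil]
      show shuffle c d [] = _
      simp [shuffle, sh, mixcomp_nil]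
  | 0, a :: u, h, c, d => by simp at h
  | n + 1, a :: u, h, c, d => by
      have hu : u.length ≤ n := by simpa using h
      have ihf : ∀ (c' d' : Series) (v : Word), v.length ≤ u.length →
          mixcomp (shuffle c' d') z v = shuffle (mixcomp c' z) (mixcomp d' z) v :=
        fun c' d' v hv => mixcomp_shuffle z n v (le_trans hv hu) c' d'
      have hsplit : (fun v => shuffle c d (a :: v)) = fun v =>
          shuffle (fun x => c (a :: x)) d v + shuffle c (fun x => d (a :: x)) v := by
        funext v; simp [shuffle, sh]
      cases a with
      | true =>
          rw [mixcomp_cons_true, hsplit, mixcomp_add,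
            sh_add_right,
            sh_congr u z.1 z.1 _ (shuffle (mixcomp (fun x => c (true :: x)) z) (mixcomp d z))
              (fun _ _ => rfl) (fun v hv => ihf _ _ v hv),
            sh_congr u z.1 z.1 _ (shuffle (mixcomp c z) (mixcomp (fun x => d (true :: x)) z))
              (fun _ _ => rfl) (fun v hv => ihf _ _ v hv)]
          show _ = sh u (fun v => mixcomp c z (true :: v)) (mixcomp d z)
            + sh u (mixcomp c z) (fun v => mixcomp d z (true :: v))
          have hc : (fun v => mixcomp c z (true :: v))
              = shuffle z.1 (mixcomp (fun x => c (true :: x)) z) :=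
            funext fun v => mixcomp_cons_true c z v
          have hd : (fun v => mixcomp d z (true :: v))
              = shuffle z.1 (mixcomp (fun x => d (true :: x)) z) :=
            funext fun v => mixcomp_cons_true d z v
          rw [hc, hd, ← sh_assoc, ← sh_assoc,
            shuffle_comm z.1 (mixcomp c z), sh_assoc u (mixcomp c z) z.1]
      | false =>
          have hsplitT : (fun v => shuffle c d (true :: v)) = fun v =>
              shuffle (fun x => c (true :: x)) d v + shuffle c (fun x => d (true :: x)) v := by
            funext v; simp [shuffle, sh]
          rw [mixcomp_cons_false, hsplit, hsplitT, mixcomp_add, mixcomp_add, sh_add_right]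
          beta_reduce
          rw [sh_congr u z.2 z.2 _ (shuffle (mixcomp (fun x => c (true :: x)) z) (mixcomp d z))
              (fun _ _ => rfl) (fun v hv => ihf _ _ v hv),
            sh_congr u z.2 z.2 _ (shuffle (mixcomp c z) (mixcomp (fun x => d (true :: x)) z))
              (fun _ _ => rfl) (fun v hv => ihf _ _ v hv),
            ihf _ _ u le_rfl, ihf _ _ u le_rfl]
          show _ = sh u (fun v => mixcomp c z (false :: v)) (mixcomp d z)
            + sh u (mixcomp c z) (fun v => mixcomp d z (false :: v))
          have hc : (fun v => mixcomp c z (false :: v))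
              = fun v => mixcomp (fun x => c (false :: x)) z v
                + shuffle z.2 (mixcomp (fun x => c (true :: x)) z) v :=
            funext fun v => mixcomp_cons_false c z v
          have hd : (fun v => mixcomp d z (false :: v))
              = fun v => mixcomp (fun x => d (false :: x)) z v
                + shuffle z.2 (mixcomp (fun x => d (true :: x)) z) v :=
            funext fun v => mixcomp_cons_false d z v
          rw [hc, hd, sh_add_left, sh_add_right, ← sh_assoc, ← sh_assoc,
            shuffle_comm z.2 (mixcomp c z), sh_assoc u (mixcomp c z) z.2]
          simp only [shuffle]
          ring

/-- for x, y, d ∈ G, (x · y) ◁ d = (x ◁ d) · (y ◁ d);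
moreover G is stable under ◁, so R_d is a group endomorphism of (G, ·). -/
theorem tri_group_endomorphism :
    (∀ x y d : Series × Series, x.1 [] = 1 → y.1 [] = 1 → d.1 [] = 1 →
      triOp (gmul x y) d = gmul (triOp x d) (triOp y d)) ∧
    (∀ x d : Series × Series, x.1 [] = 1 → d.1 [] = 1 →
      (triOp x d).1 [] = 1) := by
  constructor
  · intro x y d _ _ _
    unfold triOp gmul
    refine Prod.ext ?_ ?_
    · show mixcomp (shuffle x.1 y.1) d = shuffle (mixcomp x.1 d) (mixcomp y.1 d)
      funext w
      exact mixcomp_shuffle d w.length w le_rfl x.1 y.1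
    · show mixcomp (x.2 + shuffle x.1 y.2) d
        = mixcomp x.2 d + shuffle (mixcomp x.1 d) (mixcomp y.2 d)
      have h : (x.2 + shuffle x.1 y.2) = fun w => x.2 w + shuffle x.1 y.2 w := rfl
      rw [h, mixcomp_add]
      funext w
      simp only [Pi.add_apply]
      rw [mixcomp_shuffle d w.length w le_rfl]
      rfl
  · intro x d hx _
    show mixcomp x.1 d [] = 1
    rw [mixcomp_nil, hx]
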